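/- arXiv:2101.12306 — 6 statements merged into one kernel-verified Lean document; each statement's English description precedes it below -/
import Mathlib

section
/- Let v(θ) denote the unique positive root of p_θ(v) = (θ/(2σ²))·v³ + (θ/σ²)·(μ²+σ²)·v² + [(θ/(2σ²))·(μ²+σ²)² - (1/2)·μ²·C²]·v - (1/2)·μ²·C². Then v(θ) is strictly decreasing in θ on (0, ∞). -/
/-!
Since `p_θ(w) = θ/(2σ²) · w (w + s)² - μ²C²/2 · (w + 1)` with `s = μ² + σ²`, a positive root `w`
of `p_θ` satisfies `θ · g(w) = σ²μ²C²` for `g(w) = w (w + s)² / (w + 1)`, which is positive and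
strictly increasing on `(0, ∞)`. So `g(v(θ))` is inversely proportional to `θ`, and `v(θ)` decreases.
-/

open Set

theorem strictMonoOn_mul_add_sq_div_add_one {s : ℝ} (hs : 0 ≤ s) :
    StrictMonoOn (fun w : ℝ => w * (w + s) ^ 2 / (w + 1)) (Ioi 0) := by
  intro x (hx : 0 < x) y (hy : 0 < y) hxy
  have hfrac : x / (x + 1) < y / (y + 1) := by
    rw [div_lt_div_iff₀ (by positivity) (by positivity)]
    linarith
  have hsq : (x + s) ^ 2 < (y + s) ^ 2 := by gcongr
  calc x * (x + s) ^ 2 / (x + 1) = x / (x + 1) * (x + s) ^ 2 := by ring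
    _ < y / (y + 1) * (y + s) ^ 2 := mul_lt_mul'' hfrac hsq (by positivity) (by positivity)
    _ = y * (y + s) ^ 2 / (y + 1) := by ring

theorem strictAntiOn_of_mul_comp_eq_const {g v : ℝ → ℝ} {c : ℝ} (hg : StrictMonoOn g (Ioi 0))
    (hg_pos : ∀ x ∈ Ioi (0 : ℝ), 0 < g x) (hv : MapsTo v (Ioi 0) (Ioi 0))
    (h : ∀ θ ∈ Ioi (0 : ℝ), θ * g (v θ) = c) : StrictAntiOn v (Ioi 0) := by
  intro a (ha : 0 < a) b hb hab
  have hgb := hg_pos _ (hv hb)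
  have hg_lt : g (v b) < g (v a) := by
    have : a * g (v b) < a * g (v a) := by
      rw [h a ha]
      calc a * g (v b) < b * g (v b) := by gcongr
        _ = c := h b hb
    exact lt_of_mul_lt_mul_left this ha.le
  exact (hg.lt_iff_lt (hv hb) (hv ha)).mp hg_lt

theorem mul_eq_of_cubic_eq_zero {μ σ C θ w : ℝ} (hσ : σ ≠ 0) (hw : 0 < w)
    (hp : (θ / (2 * σ ^ 2)) * w ^ 3 + (θ / σ ^ 2) * (μ ^ 2 + σ ^ 2) * w ^ 2
        + ((θ / (2 * σ ^ 2)) * (μ ^ 2 + σ ^ 2) ^ 2 - (1 / 2) * μ ^ 2 * C ^ 2) * w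
        - (1 / 2) * μ ^ 2 * C ^ 2 = 0) :
    θ * (w * (w + (μ ^ 2 + σ ^ 2)) ^ 2 / (w + 1)) = σ ^ 2 * μ ^ 2 * C ^ 2 := by
  rw [mul_div_assoc', div_eq_iff (by positivity)]
  field_simp at hp
  linear_combination hp

theorem stmt_2_general (μ σ C : ℝ) (hσ : 0 < σ) (v : ℝ → ℝ)
    (hroot : ∀ θ ∈ Set.Ioi (0 : ℝ), 0 < v θ ∧
      (θ / (2 * σ ^ 2)) * (v θ) ^ 3 + (θ / σ ^ 2) * (μ ^ 2 + σ ^ 2) * (v θ) ^ 2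
        + ((θ / (2 * σ ^ 2)) * (μ ^ 2 + σ ^ 2) ^ 2 - (1 / 2) * μ ^ 2 * C ^ 2) * v θ
        - (1 / 2) * μ ^ 2 * C ^ 2 = 0) :
    StrictAntiOn v (Set.Ioi (0 : ℝ)) :=
  strictAntiOn_of_mul_comp_eq_const (strictMonoOn_mul_add_sq_div_add_one (by positivity))
    (fun _ (hx : (0 : ℝ) < _) => by positivity) (fun θ hθ => (hroot θ hθ).1)
    fun θ hθ => mul_eq_of_cubic_eq_zero hσ.ne' (hroot θ hθ).1 (hroot θ hθ).2

/-- If `v θ` is the unique positive root of the cubic `p_θ`, then `v` is strictly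
decreasing in `θ` on `(0, ∞)`. -/
theorem stmt_2 (μ σ C : ℝ) (hσ : 0 < σ) (hμ : μ ≠ 0) (hC : C ≠ 0) (v : ℝ → ℝ)
    (hroot : ∀ θ ∈ Set.Ioi (0 : ℝ), 0 < v θ ∧
      (θ / (2 * σ ^ 2)) * (v θ) ^ 3 + (θ / σ ^ 2) * (μ ^ 2 + σ ^ 2) * (v θ) ^ 2
        + ((θ / (2 * σ ^ 2)) * (μ ^ 2 + σ ^ 2) ^ 2 - (1 / 2) * μ ^ 2 * C ^ 2) * v θ
        - (1 / 2) * μ ^ 2 * C ^ 2 = 0)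
    (huniq : ∀ θ ∈ Set.Ioi (0 : ℝ), ∀ w : ℝ, 0 < w →
      (θ / (2 * σ ^ 2)) * w ^ 3 + (θ / σ ^ 2) * (μ ^ 2 + σ ^ 2) * w ^ 2
        + ((θ / (2 * σ ^ 2)) * (μ ^ 2 + σ ^ 2) ^ 2 - (1 / 2) * μ ^ 2 * C ^ 2) * w
        - (1 / 2) * μ ^ 2 * C ^ 2 = 0 → w = v θ) :
    StrictAntiOn v (Set.Ioi (0 : ℝ)) :=
  stmt_2_general μ σ C hσ v hroot
end

section
/- Let v(θ) be the unique positive root of the cubic p_θ(v) = (θ/(2σ²))v³ + (θ/σ²)(μ²+σ²)v² + [(θ/(2σ²))(μ²+σ²)² - (1/2)μ²C²]v - (1/2)μ²C². Then v(θ) → 0 as θ → ∞ and v(θ) → ∞ as θ → 0⁺. -/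
/-!
Clearing denominators, `p_θ(v) = 0` reads `θ v (v + m)² = c (v + 1)` with `m = μ² + σ²` and
`c = σ² μ² C² > 0`. Since `(v + m)² ≥ m²`, this forces `v (θ m² - c) ≤ c`, so `v ≤ c / (θ m² - c)`
for large `θ`. Since `c (v + 1) > c v`, it also forces `θ (v + m)² > c`, so `v ≥ √(c / θ) - m`.
-/

open Filter Topology

theorem cubic_eq_mul_sq_sub (θ s m K w : ℝ) :
    θ / (2 * s) * w ^ 3 + θ / s * m * w ^ 2 + (θ / (2 * s) * m ^ 2 - K) * w - K
      = θ / (2 * s) * (w * (w + m) ^ 2) - K * (w + 1) := by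
  ring

section RootAsymptotics

variable {v : ℝ → ℝ} {m c : ℝ}

theorem tendsto_nhds_zero_of_mul_sq_eq (hm : 0 < m)
    (hv : ∀ θ > 0, 0 < v θ ∧ θ * v θ * (v θ + m) ^ 2 = c * (v θ + 1)) :
    Tendsto v atTop (𝓝 0) := by
  have hbound : ∀ θ > 0, v θ * (θ * m ^ 2 - c) ≤ c := fun θ hθ => by
    obtain ⟨hvθ, heq⟩ := hv θ hθ
    have : θ * v θ * m ^ 2 ≤ θ * v θ * (v θ + m) ^ 2 := by gcongr; linarith
    linarith
  have hlim : Tendsto (fun θ => c / (θ * m ^ 2 - c)) atTop (𝓝 0) :=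
    tendsto_const_nhds.div_atTop
      (tendsto_atTop_add_const_right _ _ (tendsto_id.atTop_mul_const (by positivity)))
  refine tendsto_of_tendsto_of_tendsto_of_le_of_le' tendsto_const_nhds hlim ?_ ?_
  · filter_upwards [eventually_gt_atTop 0] with θ hθ using (hv θ hθ).1.le
  · filter_upwards [eventually_gt_atTop 0, eventually_gt_atTop (c / m ^ 2)] with θ hθ hθc
    have hden : 0 < θ * m ^ 2 - c := by
      rw [div_lt_iff₀ (by positivity)] at hθc
      linarith
    rw [le_div_iff₀ hden]
    exact hbound θ hθ

theorem tendsto_atTop_nhdsGT_zero_of_mul_sq_eq (hm : 0 ≤ m) (hc : 0 < c)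
    (hv : ∀ θ > 0, 0 < v θ ∧ θ * v θ * (v θ + m) ^ 2 = c * (v θ + 1)) :
    Tendsto v (𝓝[>] 0) atTop := by
  have hbound : ∀ θ > 0, √(c / θ) - m ≤ v θ := fun θ hθ => by
    obtain ⟨hvθ, heq⟩ := hv θ hθ
    have hsq : c / θ ≤ (v θ + m) ^ 2 := by
      rw [div_le_iff₀ hθ]
      nlinarith
    have := Real.sqrt_le_sqrt hsq
    rw [Real.sqrt_sq (by positivity)] at this
    linarith
  have hlim : Tendsto (fun θ => √(c / θ) - m) (𝓝[>] 0) atTop := by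
    refine tendsto_atTop_add_const_right _ _ (Real.tendsto_sqrt_atTop.comp ?_)
    exact (tendsto_inv_nhdsGT_zero.const_mul_atTop hc).congr fun θ => (div_eq_mul_inv c θ).symm
  refine tendsto_atTop_mono' _ ?_ hlim
  filter_upwards [self_mem_nhdsWithin] with θ hθ using hbound θ hθ

end RootAsymptotics

theorem stmt_3_general (μ σ C : ℝ) (hσ : 0 < σ) (hμ : μ ≠ 0) (hC : C ≠ 0) (v : ℝ → ℝ)
    (hroot : ∀ θ ∈ Set.Ioi (0 : ℝ), 0 < v θ ∧
      (θ / (2 * σ ^ 2)) * (v θ) ^ 3 + (θ / σ ^ 2) * (μ ^ 2 + σ ^ 2) * (v θ) ^ 2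
        + ((θ / (2 * σ ^ 2)) * (μ ^ 2 + σ ^ 2) ^ 2 - (1 / 2) * μ ^ 2 * C ^ 2) * v θ
        - (1 / 2) * μ ^ 2 * C ^ 2 = 0) :
    Filter.Tendsto v Filter.atTop (nhds 0) ∧
      Filter.Tendsto v (nhdsWithin 0 (Set.Ioi 0)) Filter.atTop := by
  have hv : ∀ θ > 0, 0 < v θ ∧
      θ * v θ * (v θ + (μ ^ 2 + σ ^ 2)) ^ 2 = σ ^ 2 * μ ^ 2 * C ^ 2 * (v θ + 1) := by
    intro θ hθ
    obtain ⟨hvθ, hp⟩ := hroot θ hθ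
    rw [cubic_eq_mul_sq_sub, sub_eq_zero] at hp
    refine ⟨hvθ, ?_⟩
    field_simp at hp
    linear_combination hp
  exact ⟨tendsto_nhds_zero_of_mul_sq_eq (by positivity) hv,
    tendsto_atTop_nhdsGT_zero_of_mul_sq_eq (by positivity) (by positivity) hv⟩

/-- If `v θ` is the unique positive root of the cubic `p_θ`, then `v θ → 0` as
`θ → ∞` and `v θ → ∞` as `θ → 0⁺`. -/
theorem stmt_3 (μ σ C : ℝ) (hσ : 0 < σ) (hμ : μ ≠ 0) (hC : C ≠ 0) (v : ℝ → ℝ)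
    (hroot : ∀ θ ∈ Set.Ioi (0 : ℝ), 0 < v θ ∧
      (θ / (2 * σ ^ 2)) * (v θ) ^ 3 + (θ / σ ^ 2) * (μ ^ 2 + σ ^ 2) * (v θ) ^ 2
        + ((θ / (2 * σ ^ 2)) * (μ ^ 2 + σ ^ 2) ^ 2 - (1 / 2) * μ ^ 2 * C ^ 2) * v θ
        - (1 / 2) * μ ^ 2 * C ^ 2 = 0)
    (huniq : ∀ θ ∈ Set.Ioi (0 : ℝ), ∀ w : ℝ, 0 < w →
      (θ / (2 * σ ^ 2)) * w ^ 3 + (θ / σ ^ 2) * (μ ^ 2 + σ ^ 2) * w ^ 2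
        + ((θ / (2 * σ ^ 2)) * (μ ^ 2 + σ ^ 2) ^ 2 - (1 / 2) * μ ^ 2 * C ^ 2) * w
        - (1 / 2) * μ ^ 2 * C ^ 2 = 0 → w = v θ) :
    Filter.Tendsto v Filter.atTop (nhds 0) ∧
      Filter.Tendsto v (nhdsWithin 0 (Set.Ioi 0)) Filter.atTop :=
  stmt_3_general μ σ C hσ hμ hC v hroot
end

section
/- Define φ*(θ) = μ·C / (v(θ) + μ² + σ²), where v(θ) is the unique positive root of the cubic p_θ as above, μ > 0, C > 0, σ > 0. Then (i) φ*(θ) > 0 for all θ > 0; (ii) φ*(θ) is strictly increasing in θ; (iii) φ*(θ) → μC/(μ² + σ²) as θ → ∞; (iv) φ*(θ) → 0 as θ → 0⁺. -/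
/-!
Multiplying the cubic by `2σ²` turns it into `θ · v (v + S)² = A (v + 1)` with `S = μ² + σ²` and
`A = σ²μ²C²`, so `θ = A (v + 1) / (v (v + S)²)`. This map is strictly decreasing on `(0, ∞)`, from
`+∞` at `0⁺` down to `0` at `∞`; hence its inverse `v` is strictly decreasing, with `v → 0` as
`θ → ∞` and `v → ∞` as `θ → 0⁺`, and `φ* = μC / (v + S)` inherits the reversed behaviour.
-/

open Set Filter Topology

noncomputable def penaltyOfRoot (S A w : ℝ) : ℝ := A * (w + 1) / (w * (w + S) ^ 2)

lemma penaltyOfRoot_pos {S A w : ℝ} (hS : 0 ≤ S) (hA : 0 < A) (hw : 0 < w) :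
    0 < penaltyOfRoot S A w := by
  unfold penaltyOfRoot
  positivity

lemma strictAntiOn_penaltyOfRoot {S A : ℝ} (hS : 0 ≤ S) (hA : 0 < A) :
    StrictAntiOn (penaltyOfRoot S A) (Ioi 0) := by
  intro a (ha : 0 < a) b (hb : 0 < b) hab
  unfold penaltyOfRoot
  rw [div_lt_div_iff₀ (by positivity) (by positivity), mul_assoc, mul_assoc]
  gcongr A * ?_
  calc (b + 1) * (a * (a + S) ^ 2) = ((b + 1) * a) * (a + S) ^ 2 := by ring
    _ < ((a + 1) * b) * (a + S) ^ 2 := mul_lt_mul_of_pos_right (by linarith) (by positivity)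
    _ ≤ ((a + 1) * b) * (b + S) ^ 2 := by gcongr
    _ = (a + 1) * (b * (b + S) ^ 2) := by ring

lemma cubic_eq_zero_iff_penaltyOfRoot_eq {μ σ C θ w : ℝ} (hσ : σ ≠ 0) (hw : 0 < w) :
    (θ / (2 * σ ^ 2)) * w ^ 3 + (θ / σ ^ 2) * (μ ^ 2 + σ ^ 2) * w ^ 2
        + ((θ / (2 * σ ^ 2)) * (μ ^ 2 + σ ^ 2) ^ 2 - (1 / 2) * μ ^ 2 * C ^ 2) * w
        - (1 / 2) * μ ^ 2 * C ^ 2 = 0 ↔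
      penaltyOfRoot (μ ^ 2 + σ ^ 2) (σ ^ 2 * μ ^ 2 * C ^ 2) w = θ := by
  have hden : w * (w + (μ ^ 2 + σ ^ 2)) ^ 2 ≠ 0 := by positivity
  have hscaled : 2 * σ ^ 2 * ((θ / (2 * σ ^ 2)) * w ^ 3 + (θ / σ ^ 2) * (μ ^ 2 + σ ^ 2) * w ^ 2
        + ((θ / (2 * σ ^ 2)) * (μ ^ 2 + σ ^ 2) ^ 2 - (1 / 2) * μ ^ 2 * C ^ 2) * w
        - (1 / 2) * μ ^ 2 * C ^ 2) =
      θ * (w * (w + (μ ^ 2 + σ ^ 2)) ^ 2) - σ ^ 2 * μ ^ 2 * C ^ 2 * (w + 1) := by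
    field_simp
    ring
  rw [penaltyOfRoot, div_eq_iff hden, ← mul_right_inj' (by positivity : 2 * σ ^ 2 ≠ 0), hscaled,
    mul_zero, sub_eq_zero, eq_comm]

section RightInverse

variable {g v : ℝ → ℝ} (hg : StrictAntiOn g (Ioi 0))
  (hv : ∀ θ ∈ Ioi (0 : ℝ), 0 < v θ ∧ g (v θ) = θ)
include hg hv

lemma StrictAntiOn.strictAntiOn_of_rightInvOn : StrictAntiOn v (Ioi 0) := by
  intro a ha b hb hab
  rw [← hg.lt_iff_gt (hv a ha).1 (hv b hb).1, (hv a ha).2, (hv b hb).2]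
  exact hab

lemma StrictAntiOn.tendsto_rightInvOn_atTop : Tendsto v atTop (𝓝 0) := by
  refine tendsto_order.2 ⟨fun a ha => ?_, fun a ha => ?_⟩
  · filter_upwards [eventually_gt_atTop 0] with θ hθ
    exact ha.trans (hv θ hθ).1
  · filter_upwards [eventually_gt_atTop 0, eventually_gt_atTop (g a)] with θ hθ hθa
    rw [← hg.lt_iff_gt ha (hv θ hθ).1, (hv θ hθ).2]
    exact hθa

lemma StrictAntiOn.tendsto_rightInvOn_nhdsGT_zero (hpos : ∀ w ∈ Ioi (0 : ℝ), 0 < g w) :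
    Tendsto v (𝓝[>] 0) atTop := by
  refine tendsto_atTop.2 fun M => ?_
  have hM : (0 : ℝ) < max M 1 := lt_max_of_lt_right one_pos
  filter_upwards [Ioo_mem_nhdsGT (hpos _ hM)] with θ hθ
  refine (le_max_left M 1).trans (hg.le_iff_ge (hv θ hθ.1).1 hM |>.1 ?_)
  rw [(hv θ hθ.1).2]
  exact hθ.2.le

end RightInverse

theorem stmt_4_general (μ σ C : ℝ) (hσ : 0 < σ) (hμ : 0 < μ) (hC : 0 < C) (v : ℝ → ℝ)
    (hroot : ∀ θ ∈ Set.Ioi (0 : ℝ), 0 < v θ ∧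
      (θ / (2 * σ ^ 2)) * (v θ) ^ 3 + (θ / σ ^ 2) * (μ ^ 2 + σ ^ 2) * (v θ) ^ 2
        + ((θ / (2 * σ ^ 2)) * (μ ^ 2 + σ ^ 2) ^ 2 - (1 / 2) * μ ^ 2 * C ^ 2) * v θ
        - (1 / 2) * μ ^ 2 * C ^ 2 = 0)
    (φ : ℝ → ℝ) (hφ : ∀ θ, φ θ = μ * C / (v θ + μ ^ 2 + σ ^ 2)) :
    (∀ θ ∈ Set.Ioi (0 : ℝ), 0 < φ θ) ∧
    StrictMonoOn φ (Set.Ioi (0 : ℝ)) ∧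
    Filter.Tendsto φ Filter.atTop (nhds (μ * C / (μ ^ 2 + σ ^ 2))) ∧
    Filter.Tendsto φ (nhdsWithin 0 (Set.Ioi 0)) (nhds 0) := by
  have hS : 0 ≤ μ ^ 2 + σ ^ 2 := by positivity
  have hA : 0 < σ ^ 2 * μ ^ 2 * C ^ 2 := by positivity
  have hg := strictAntiOn_penaltyOfRoot hS hA
  have hv : ∀ θ ∈ Ioi (0 : ℝ), 0 < v θ ∧ penaltyOfRoot _ _ (v θ) = θ := fun θ hθ =>
    ⟨(hroot θ hθ).1, (cubic_eq_zero_iff_penaltyOfRoot_eq hσ.ne' (hroot θ hθ).1).1 (hroot θ hθ).2⟩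
  obtain rfl : φ = fun θ => μ * C / (v θ + (μ ^ 2 + σ ^ 2)) :=
    funext fun θ => by rw [hφ, add_assoc]
  refine ⟨fun θ hθ => ?_, fun a ha b hb hab => ?_, ?_, ?_⟩
  · have := (hv θ hθ).1
    positivity
  · have := (hv b hb).1
    have := hg.strictAntiOn_of_rightInvOn hv ha hb hab
    exact div_lt_div_of_pos_left (by positivity) (by positivity) (by linarith)
  · have hden := (hg.tendsto_rightInvOn_atTop hv).add_const (μ ^ 2 + σ ^ 2)
    rw [zero_add] at hden
    exact tendsto_const_nhds.div hden (by positivity)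
  · exact tendsto_const_nhds.div_atTop <| tendsto_atTop_add_const_right _ _ <|
      hg.tendsto_rightInvOn_nhdsGT_zero hv fun w hw => penaltyOfRoot_pos hS hA hw

/-- Properties of the optimal portfolio weight `φ*(θ) = μC/(v(θ) + μ² + σ²)`:
positivity, strict monotonicity in `θ`, limit `μC/(μ²+σ²)` as `θ → ∞`, and
limit `0` as `θ → 0⁺`. -/
theorem stmt_4 (μ σ C : ℝ) (hσ : 0 < σ) (hμ : 0 < μ) (hC : 0 < C) (v : ℝ → ℝ)
    (hroot : ∀ θ ∈ Set.Ioi (0 : ℝ), 0 < v θ ∧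
      (θ / (2 * σ ^ 2)) * (v θ) ^ 3 + (θ / σ ^ 2) * (μ ^ 2 + σ ^ 2) * (v θ) ^ 2
        + ((θ / (2 * σ ^ 2)) * (μ ^ 2 + σ ^ 2) ^ 2 - (1 / 2) * μ ^ 2 * C ^ 2) * v θ
        - (1 / 2) * μ ^ 2 * C ^ 2 = 0)
    (huniq : ∀ θ ∈ Set.Ioi (0 : ℝ), ∀ w : ℝ, 0 < w →
      (θ / (2 * σ ^ 2)) * w ^ 3 + (θ / σ ^ 2) * (μ ^ 2 + σ ^ 2) * w ^ 2
        + ((θ / (2 * σ ^ 2)) * (μ ^ 2 + σ ^ 2) ^ 2 - (1 / 2) * μ ^ 2 * C ^ 2) * w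
        - (1 / 2) * μ ^ 2 * C ^ 2 = 0 → w = v θ)
    (φ : ℝ → ℝ) (hφ : ∀ θ, φ θ = μ * C / (v θ + μ ^ 2 + σ ^ 2)) :
    (∀ θ ∈ Set.Ioi (0 : ℝ), 0 < φ θ) ∧
    StrictMonoOn φ (Set.Ioi (0 : ℝ)) ∧
    Filter.Tendsto φ Filter.atTop (nhds (μ * C / (μ ^ 2 + σ ^ 2))) ∧
    Filter.Tendsto φ (nhdsWithin 0 (Set.Ioi 0)) (nhds 0) :=
  stmt_4_general μ σ C hσ hμ hC v hroot φ hφ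
end

section
/- Define the worst-case variance ratio ν²(θ) = v(θ)/σ² + 1, where v(θ) is the unique positive root of p_θ. Then ν²(θ) > 1 for all θ > 0, ν²(θ) → 1 as θ → ∞, and ν²(θ) → ∞ as θ → 0⁺. -/
/-!
Multiplying the cubic by `2σ²` turns it into `θ v (v + A)² = K (v + 1)` with
`A = μ² + σ²` and `K = σ²μ²C² > 0`. Since `v > 0`, dropping `v²` from `(v + A)²` gives
`θ A² v ≤ K (v + 1)`, i.e. `v = O(1/θ)` as `θ → ∞`; dropping the `1` from `v + 1` gives
`θ (v + A)² ≥ K`, i.e. `v ≥ √(K/θ) - A → ∞` as `θ → 0⁺`.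
-/

open Filter Topology

lemma mul_sq_eq_of_cubic_eq_zero {μ σ C θ w : ℝ} (hσ : σ ≠ 0)
    (h : (θ / (2 * σ ^ 2)) * w ^ 3 + (θ / σ ^ 2) * (μ ^ 2 + σ ^ 2) * w ^ 2
      + ((θ / (2 * σ ^ 2)) * (μ ^ 2 + σ ^ 2) ^ 2 - (1 / 2) * μ ^ 2 * C ^ 2) * w
      - (1 / 2) * μ ^ 2 * C ^ 2 = 0) :
    θ * w * (w + (μ ^ 2 + σ ^ 2)) ^ 2 = σ ^ 2 * μ ^ 2 * C ^ 2 * (w + 1) := by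
  field_simp at h
  linear_combination h

section

variable {θ A K w : ℝ}

lemma le_div_of_mul_sq_eq (hA : 0 ≤ A) (hθ : 0 ≤ θ) (hw : 0 ≤ w) (hK : K < θ * A ^ 2)
    (h : θ * w * (w + A) ^ 2 = K * (w + 1)) : w ≤ K / (θ * A ^ 2 - K) := by
  have hsq : θ * w * A ^ 2 ≤ θ * w * (w + A) ^ 2 := by gcongr; linarith
  rw [le_div_iff₀ (by linarith)]
  nlinarith

lemma sqrt_div_sub_le_of_mul_sq_eq (hA : 0 ≤ A) (hK : 0 ≤ K) (hθ : 0 < θ) (hw : 0 < w)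
    (h : θ * w * (w + A) ^ 2 = K * (w + 1)) : √(K / θ) - A ≤ w := by
  have hK_le : K ≤ θ * (w + A) ^ 2 := by
    refine le_of_mul_le_mul_right ?_ hw
    nlinarith
  have : √(K / θ) ≤ w + A := by
    rw [Real.sqrt_le_left (by positivity), div_le_iff₀ hθ]
    linarith
  linarith

end

section

variable {A K : ℝ} {v : ℝ → ℝ}

lemma tendsto_atTop_zero_of_mul_sq_eq (hA : 0 < A)
    (hv : ∀ θ > 0, 0 < v θ ∧ θ * v θ * (v θ + A) ^ 2 = K * (v θ + 1)) :
    Tendsto v atTop (𝓝 0) := by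
  have hden : Tendsto (fun θ ↦ θ * A ^ 2 - K) atTop atTop :=
    tendsto_atTop_add_const_right _ _ (tendsto_id.atTop_mul_const (by positivity))
  refine tendsto_of_tendsto_of_tendsto_of_le_of_le' tendsto_const_nhds
    ((tendsto_const_nhds (x := K)).div_atTop hden) ?_ ?_
  · filter_upwards [eventually_gt_atTop 0] with θ hθ using (hv θ hθ).1.le
  · filter_upwards [eventually_gt_atTop 0, hden.eventually_gt_atTop 0] with θ hθ hθK
    exact le_div_of_mul_sq_eq hA.le hθ.le (hv θ hθ).1.le (by linarith) (hv θ hθ).2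

lemma tendsto_nhdsGT_zero_atTop_of_mul_sq_eq (hA : 0 ≤ A) (hK : 0 < K)
    (hv : ∀ θ > 0, 0 < v θ ∧ θ * v θ * (v θ + A) ^ 2 = K * (v θ + 1)) :
    Tendsto v (𝓝[>] 0) atTop := by
  have hdiv : Tendsto (fun θ : ℝ ↦ K / θ) (𝓝[>] 0) atTop := by
    simpa only [div_eq_mul_inv] using tendsto_inv_nhdsGT_zero.const_mul_atTop hK
  have hlower := tendsto_atTop_add_const_right _ (-A) (Real.tendsto_sqrt_atTop.comp hdiv)
  refine tendsto_atTop_mono' _ ?_ hlower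
  filter_upwards [self_mem_nhdsWithin] with θ (hθ : 0 < θ)
  exact sqrt_div_sub_le_of_mul_sq_eq hA hK.le hθ (hv θ hθ).1 (hv θ hθ).2

end

theorem stmt_5_general (μ σ C : ℝ) (hσ : 0 < σ) (hμ : μ ≠ 0) (hC : C ≠ 0) (v : ℝ → ℝ)
    (hroot : ∀ θ ∈ Set.Ioi (0 : ℝ), 0 < v θ ∧
      (θ / (2 * σ ^ 2)) * (v θ) ^ 3 + (θ / σ ^ 2) * (μ ^ 2 + σ ^ 2) * (v θ) ^ 2
        + ((θ / (2 * σ ^ 2)) * (μ ^ 2 + σ ^ 2) ^ 2 - (1 / 2) * μ ^ 2 * C ^ 2) * v θ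
        - (1 / 2) * μ ^ 2 * C ^ 2 = 0)
    (ν2 : ℝ → ℝ) (hν2 : ∀ θ, ν2 θ = v θ / σ ^ 2 + 1) :
    (∀ θ ∈ Set.Ioi (0 : ℝ), 1 < ν2 θ) ∧
    Filter.Tendsto ν2 Filter.atTop (nhds 1) ∧
    Filter.Tendsto ν2 (nhdsWithin 0 (Set.Ioi 0)) Filter.atTop := by
  have hv : ∀ θ > 0, 0 < v θ ∧ θ * v θ * (v θ + (μ ^ 2 + σ ^ 2)) ^ 2
      = σ ^ 2 * μ ^ 2 * C ^ 2 * (v θ + 1) := fun θ hθ ↦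
    ⟨(hroot θ hθ).1, mul_sq_eq_of_cubic_eq_zero hσ.ne' (hroot θ hθ).2⟩
  have hA : 0 < μ ^ 2 + σ ^ 2 := by positivity
  have hK : 0 < σ ^ 2 * μ ^ 2 * C ^ 2 := by positivity
  have hν2_eq : ν2 = fun θ ↦ v θ / σ ^ 2 + 1 := funext hν2
  subst hν2_eq
  refine ⟨fun θ hθ ↦ ?_, ?_, ?_⟩
  · have := (hv θ hθ).1
    simp only [lt_add_iff_pos_left]
    positivity
  · simpa using ((tendsto_atTop_zero_of_mul_sq_eq hA hv).div_const (σ ^ 2)).add_const 1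
  · exact ((tendsto_nhdsGT_zero_atTop_of_mul_sq_eq hA.le hK hv).atTop_div_const
      (by positivity)).atTop_add tendsto_const_nhds

/-- The worst-case variance ratio `ν²(θ) = v(θ)/σ² + 1` satisfies `ν²(θ) > 1`
for all `θ > 0`, `ν²(θ) → 1` as `θ → ∞`, and `ν²(θ) → ∞` as `θ → 0⁺`. -/
theorem stmt_5 (μ σ C : ℝ) (hσ : 0 < σ) (hμ : μ ≠ 0) (hC : C ≠ 0) (v : ℝ → ℝ)
    (hroot : ∀ θ ∈ Set.Ioi (0 : ℝ), 0 < v θ ∧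
      (θ / (2 * σ ^ 2)) * (v θ) ^ 3 + (θ / σ ^ 2) * (μ ^ 2 + σ ^ 2) * (v θ) ^ 2
        + ((θ / (2 * σ ^ 2)) * (μ ^ 2 + σ ^ 2) ^ 2 - (1 / 2) * μ ^ 2 * C ^ 2) * v θ
        - (1 / 2) * μ ^ 2 * C ^ 2 = 0)
    (huniq : ∀ θ ∈ Set.Ioi (0 : ℝ), ∀ w : ℝ, 0 < w →
      (θ / (2 * σ ^ 2)) * w ^ 3 + (θ / σ ^ 2) * (μ ^ 2 + σ ^ 2) * w ^ 2
        + ((θ / (2 * σ ^ 2)) * (μ ^ 2 + σ ^ 2) ^ 2 - (1 / 2) * μ ^ 2 * C ^ 2) * w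
        - (1 / 2) * μ ^ 2 * C ^ 2 = 0 → w = v θ)
    (ν2 : ℝ → ℝ) (hν2 : ∀ θ, ν2 θ = v θ / σ ^ 2 + 1) :
    (∀ θ ∈ Set.Ioi (0 : ℝ), 1 < ν2 θ) ∧
    Filter.Tendsto ν2 Filter.atTop (nhds 1) ∧
    Filter.Tendsto ν2 (nhdsWithin 0 (Set.Ioi 0)) Filter.atTop :=
  stmt_5_general μ σ C hσ hμ hC v hroot ν2 hν2
end

section
/- For each θ > 0, the function g(s) = (1/2)·μ²·C²·(1/s) + (θ/2)·[ (s - μ²)/σ² - 1 - log((s - μ²)/σ²) ] is strictly convex on (μ², ∞), and its unique minimizer s(θ) satisfies s(θ) > μ² + σ², provided μ ≠ 0 and C ≠ 0. -/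
/-!
The derivative `g'(s) = -μ²C²/(2s²) + (θ/2)(1/σ² - 1/(s - μ²))` is strictly increasing on
`(μ², ∞)`, which gives strict convexity. A minimizer is a root of `g'`; at the benchmark
`μ² + σ²` the entropy penalty is stationary, so `g'(μ² + σ²) = -μ²C²/(2(μ² + σ²)²) < 0` and the
root lies to the right of it.
-/

open Real Set

noncomputable def natureObjective (μ σ θ C s : ℝ) : ℝ :=
  (1 / 2) * μ ^ 2 * C ^ 2 * (1 / s)
    + (θ / 2) * ((s - μ ^ 2) / σ ^ 2 - 1 - log ((s - μ ^ 2) / σ ^ 2))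

noncomputable def natureObjectiveDeriv (μ σ θ C s : ℝ) : ℝ :=
  -((1 / 2) * μ ^ 2 * C ^ 2 / s ^ 2) + (θ / 2) * (1 / σ ^ 2 - 1 / (s - μ ^ 2))

section

variable {μ σ θ C : ℝ}

theorem hasDerivAt_natureObjective (hσ : σ ≠ 0) {s : ℝ} (hs : μ ^ 2 < s) :
    HasDerivAt (natureObjective μ σ θ C) (natureObjectiveDeriv μ σ θ C s) s := by
  have hs₀ : s ≠ 0 := ((sq_nonneg μ).trans_lt hs).ne'
  have hsμ : s - μ ^ 2 ≠ 0 := (sub_pos.2 hs).ne'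
  have hratio : HasDerivAt (fun s => (s - μ ^ 2) / σ ^ 2) (1 / σ ^ 2) s :=
    ((hasDerivAt_id s).sub_const _).div_const _
  have hlog := hratio.log (div_ne_zero hsμ (pow_ne_zero 2 hσ))
  have hinv : HasDerivAt (fun y : ℝ => 1 / y) (-(s ^ 2)⁻¹) s := by
    simpa only [one_div] using hasDerivAt_inv hs₀
  refine ((hinv.const_mul _).add
    (((hratio.sub_const 1).sub hlog).const_mul (θ / 2))).congr_deriv ?_
  simp only [natureObjectiveDeriv]
  field_simp

theorem strictMonoOn_natureObjectiveDeriv (hθ : 0 < θ) :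
    StrictMonoOn (natureObjectiveDeriv μ σ θ C) (Ioi (μ ^ 2)) := by
  intro x (hx : μ ^ 2 < x) y _ hxy
  have hx₀ : 0 < x := (sq_nonneg μ).trans_lt hx
  simp only [natureObjectiveDeriv]
  exact add_lt_add_of_le_of_lt (by gcongr) (by gcongr)

theorem natureObjectiveDeriv_benchmark_neg (hσ : σ ≠ 0) (hμ : μ ≠ 0) (hC : C ≠ 0) :
    natureObjectiveDeriv μ σ θ C (μ ^ 2 + σ ^ 2) < 0 := by
  simp only [natureObjectiveDeriv, add_sub_cancel_left, sub_self, mul_zero, add_zero, neg_lt_zero]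
  positivity

theorem strictConvexOn_natureObjective (hσ : σ ≠ 0) (hθ : 0 < θ) :
    StrictConvexOn ℝ (Ioi (μ ^ 2)) (natureObjective μ σ θ C) := by
  refine StrictMonoOn.strictConvexOn_of_deriv (convex_Ioi _) (fun s hs => ?_) ?_
  · exact (hasDerivAt_natureObjective hσ hs).continuousAt.continuousWithinAt
  · rw [interior_Ioi]
    intro x hx y hy hxy
    rw [(hasDerivAt_natureObjective hσ hx).deriv, (hasDerivAt_natureObjective hσ hy).deriv]
    exact strictMonoOn_natureObjectiveDeriv hθ hx hy hxy

end

/-- `g(s) = (1/2)μ²C²/s + (θ/2)[(s-μ²)/σ² - 1 - log((s-μ²)/σ²)]` is strictly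
convex on `(μ², ∞)`, and any minimizer `s` of `g` on `(μ², ∞)` satisfies
`s > μ² + σ²`. -/
theorem stmt_6 (μ σ θ C : ℝ) (hσ : 0 < σ) (hθ : 0 < θ) (hμ : μ ≠ 0) (hC : C ≠ 0) :
    StrictConvexOn ℝ (Set.Ioi (μ ^ 2))
      (fun s : ℝ =>
        (1 / 2) * μ ^ 2 * C ^ 2 * (1 / s)
          + (θ / 2) * ((s - μ ^ 2) / σ ^ 2 - 1 - Real.log ((s - μ ^ 2) / σ ^ 2))) ∧
    ∀ s ∈ Set.Ioi (μ ^ 2),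
      IsMinOn
        (fun s : ℝ =>
          (1 / 2) * μ ^ 2 * C ^ 2 * (1 / s)
            + (θ / 2) * ((s - μ ^ 2) / σ ^ 2 - 1 - Real.log ((s - μ ^ 2) / σ ^ 2)))
        (Set.Ioi (μ ^ 2)) s →
      μ ^ 2 + σ ^ 2 < s := by
  refine ⟨strictConvexOn_natureObjective hσ.ne' hθ, fun s hs hmin => ?_⟩
  have hcritical : natureObjectiveDeriv μ σ θ C s = 0 :=
    (hmin.isLocalMin (isOpen_Ioi.mem_nhds hs)).hasDerivAt_eq_zero
      (hasDerivAt_natureObjective hσ.ne' hs)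
  have hbenchmark : μ ^ 2 + σ ^ 2 ∈ Ioi (μ ^ 2) := lt_add_of_pos_right _ (pow_pos hσ 2)
  rw [← (strictMonoOn_natureObjectiveDeriv hθ).lt_iff_lt hbenchmark hs, hcritical]
  exact natureObjectiveDeriv_benchmark_neg hσ.ne' hμ hC
end

section
/- Let L(m̃, s̃; θ) = (1/2)·m̃²/(m̃² + s̃)·C² - (1/2)C² + (θ/2)·[ s̃/σ² + (m̃ - μ)²/σ² - log(s̃/σ²) - 1 ] for m̃ ∈ ℝ, s̃ > 0, with C > 0, μ > 0, σ > 0, θ > 0. At any interior minimizer (μ_u, σ_u²), the first-order condition in s̃ gives (1/2)·(μ_u²/(μ_u² + σ_u²)²)·C² = (θ/2)·(1/σ² - 1/σ_u²), and consequently σ_u² > σ² whenever μ_u ≠ 0. -/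
/-! Restricting the objective to the line `m̃ = μ_u` gives a one-variable local minimum at `σ_u²`,
so its derivative vanishes there. When `μ_u ≠ 0` the left side of the resulting first-order
condition is positive, hence so is `1/σ² - 1/σ_u²`. -/

theorem IsLocalMin.hasDerivAt_snd_eq_zero {E : Type*} [TopologicalSpace E] {f : E × ℝ → ℝ}
    {x : E} {y f' : ℝ}
    (h : IsLocalMin f (x, y)) (hf : HasDerivAt (fun t => f (x, t)) f' y) : f' = 0 :=
  (h.comp_continuous (Continuous.prodMk_right x).continuousAt).hasDerivAt_eq_zero hf

theorem hasDerivAt_div_const_add (a : ℝ) {s : ℝ} (hs : a + s ≠ 0) :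
    HasDerivAt (fun t => a / (a + t)) (-a / (a + s) ^ 2) s := by
  simpa using (hasDerivAt_const s a).fun_div ((hasDerivAt_id s).const_add a) hs

theorem hasDerivAt_log_div_const {c s : ℝ} (hc : c ≠ 0) (hs : s ≠ 0) :
    HasDerivAt (fun t => Real.log (t / c)) (1 / s) s := by
  convert ((hasDerivAt_id' s).div_const c).log (div_ne_zero hs hc) using 1
  field_simp

theorem hasDerivAt_multiplierObjective_variance (μ σ θ C m : ℝ) {s : ℝ} (hσ : σ ≠ 0) (hs : s ≠ 0)
    (hm : m ^ 2 + s ≠ 0) :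
    HasDerivAt (fun t => (1 / 2) * (m ^ 2 / (m ^ 2 + t)) * C ^ 2 - (1 / 2) * C ^ 2
        + (θ / 2) * (t / σ ^ 2 + (m - μ) ^ 2 / σ ^ 2 - Real.log (t / σ ^ 2) - 1))
      (-((1 / 2) * (m ^ 2 / (m ^ 2 + s) ^ 2) * C ^ 2) + (θ / 2) * (1 / σ ^ 2 - 1 / s)) s := by
  have hkl := ((((hasDerivAt_id' s).div_const (σ ^ 2)).add_const ((m - μ) ^ 2 / σ ^ 2)).fun_sub
    (hasDerivAt_log_div_const (pow_ne_zero 2 hσ) hs)).sub_const 1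
  refine (((((hasDerivAt_div_const_add (m ^ 2) hm).const_mul (1 / 2)).mul_const (C ^ 2)).sub_const
    ((1 / 2) * C ^ 2)).fun_add (hkl.const_mul (θ / 2))).congr_deriv ?_
  ring

theorem stmt_16_general (μ σ θ C : ℝ) (hC : 0 < C) (hσ : 0 < σ) (hθ : 0 < θ)
    (L : ℝ → ℝ → ℝ)
    (hL : ∀ m s : ℝ, L m s =
      (1 / 2) * (m ^ 2 / (m ^ 2 + s)) * C ^ 2 - (1 / 2) * C ^ 2
        + (θ / 2) * (s / σ ^ 2 + (m - μ) ^ 2 / σ ^ 2 - Real.log (s / σ ^ 2) - 1))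
    (mu su : ℝ) (hsu : 0 < su)
    (hmin : IsLocalMin (fun p : ℝ × ℝ => L p.1 p.2) (mu, su)) :
    (1 / 2) * (mu ^ 2 / (mu ^ 2 + su) ^ 2) * C ^ 2
      = (θ / 2) * (1 / σ ^ 2 - 1 / su) ∧
    (mu ≠ 0 → σ ^ 2 < su) := by
  have hderiv := hasDerivAt_multiplierObjective_variance μ σ θ C mu hσ.ne' hsu.ne' (by positivity)
  simp only [← hL] at hderiv
  have hfoc := neg_add_eq_zero.mp (hmin.hasDerivAt_snd_eq_zero hderiv)
  refine ⟨hfoc, fun hmu => ?_⟩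
  have hgap : 0 < 1 / σ ^ 2 - 1 / su := by
    have : 0 < (θ / 2) * (1 / σ ^ 2 - 1 / su) := hfoc ▸ by positivity
    exact pos_of_mul_pos_right this (by positivity)
  exact lt_of_one_div_lt_one_div hsu (sub_pos.mp hgap)

/-- Multiplier (unconstrained) portfolio problem: at any interior minimizer
`(μ_u, σ_u²)` of
`L(m̃, s̃) = (1/2)(m̃²/(m̃²+s̃))C² - (1/2)C² + (θ/2)[s̃/σ² + (m̃-μ)²/σ² - log(s̃/σ²) - 1]`,
the first-order condition in `s̃` gives
`(1/2)(μ_u²/(μ_u²+σ_u²)²)C² = (θ/2)(1/σ² - 1/σ_u²)`, and consequently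
`σ_u² > σ²` whenever `μ_u ≠ 0`. -/
theorem stmt_16 (μ σ θ C : ℝ) (hC : 0 < C) (hμ : 0 < μ) (hσ : 0 < σ) (hθ : 0 < θ)
    (L : ℝ → ℝ → ℝ)
    (hL : ∀ m s : ℝ, L m s =
      (1 / 2) * (m ^ 2 / (m ^ 2 + s)) * C ^ 2 - (1 / 2) * C ^ 2
        + (θ / 2) * (s / σ ^ 2 + (m - μ) ^ 2 / σ ^ 2 - Real.log (s / σ ^ 2) - 1))
    (mu su : ℝ) (hsu : 0 < su)
    (hmin : IsLocalMin (fun p : ℝ × ℝ => L p.1 p.2) (mu, su)) :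
    (1 / 2) * (mu ^ 2 / (mu ^ 2 + su) ^ 2) * C ^ 2
      = (θ / 2) * (1 / σ ^ 2 - 1 / su) ∧
    (mu ≠ 0 → σ ^ 2 < su) :=
  stmt_16_general μ σ θ C hC hσ hθ L hL mu su hsu hmin
end
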